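/- Consider the process on a multiset Q₀ of n tokens (and empty Q₁,…,Q_t): in each round, for every i, repeatedly remove pairs of tokens from Qᵢ and add one token to Q_{i+1} as long as |Qᵢ| ≥ 3 (each application removes 2 tokens from Qᵢ and adds 1 to Q_{i+1}). Then each round in which some |Qᵢ| ≥ 3 reduces the total number of tokens Σᵢ|Qᵢ| by at least (Σᵢ|Qᵢ| − 2(t+1))/3, and the process reaches a state with all |Qᵢ| ≤ 2 after O(log n) rounds. -/

import Mathlib

/-! The binary value `∑ qᵢ 2ⁱ` of the levels never grows in a round (a full adder trades two
tokens worth `2ⁱ` for one worth `2ⁱ⁺¹`), so the top level never holds more than one token.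
Given that, a level `i < t` of size `s` ends a round with `residue s + carries s ≤ (2s + 2)/3`
tokens, which is the claimed decrease of the total. For the number of rounds, the tokens above
two on level `i < t`, weighted by `2^(t-i)`, at least halve in every round, since level `i + 1`
gains only `carries s ≤ s - 2` of them; starting from at most `n · 2^t ≤ n²`, this potential
vanishes after `2 (log₂ n + 1)` rounds. -/

/-- Residual size of a level after repeatedly applying full adders (each removes
2 tokens) while the size is at least 3: the result is 1 or 2 if s ≥ 3, else s. -/
def residue (s : ℕ) : ℕ := if s ≤ 2 then s else if Even s then 2 else 1

/-- The number of carry tokens a level of size s sends to the next level. -/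
def carries (s : ℕ) : ℕ := (s - residue s) / 2

/-- One round of the almost-counting process on levels Q₀,…,Q_t (sizes `q i`):
every level i < t is reduced to its residue, carries are added to the next level;
the top level t only receives carries. -/
def roundStep (t : ℕ) (q : ℕ → ℕ) : ℕ → ℕ := fun i =>
  if i = 0 then residue (q 0)
  else if i < t then residue (q i) + carries (q (i - 1))
  else if i = t then q t + carries (q (t - 1))
  else q i

open Finset

lemma Nat.clog_succ_sub_one_eq_log {b n : ℕ} (hb : 1 < b) (hn : n ≠ 0) :
    Nat.clog b (n + 1) - 1 = Nat.log b n := by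
  have hpos := Nat.clog_pos hb (by omega : 1 < n + 1)
  refine ((Nat.log_eq_iff (Or.inr ⟨hb, hn⟩)).mpr ⟨?_, ?_⟩).symm
  · have := Nat.pow_pred_clog_lt_self hb (x := n + 1) (by omega)
    rw [Nat.pred_eq_sub_one] at this
    omega
  · rw [Nat.sub_add_cancel hpos]
    exact Nat.lt_of_succ_le (Nat.le_pow_clog hb _)

lemma pow_mul_iterate_le {α : Type*} (f : α → α) (Φ : α → ℕ) {c : ℕ}
    (h : ∀ x, c * Φ (f x) ≤ Φ x) (x : α) (r : ℕ) : c ^ r * Φ (f^[r] x) ≤ Φ x := by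
  induction r with
  | zero => simp
  | succ r ih =>
    calc c ^ (r + 1) * Φ (f^[r + 1] x) = c ^ r * (c * Φ (f (f^[r] x))) := by
          rw [Function.iterate_succ_apply', pow_succ, mul_assoc]
      _ ≤ Φ x := (Nat.mul_le_mul_left _ (h _)).trans ih

lemma residue_le_two (s : ℕ) : residue s ≤ 2 := by
  unfold residue; split_ifs <;> omega

lemma residue_le (s : ℕ) : residue s ≤ s := by
  unfold residue; split_ifs <;> omega

lemma two_mul_carries_add_residue (s : ℕ) : 2 * carries s + residue s = s := by
  unfold carries residue
  split_ifs with hs heven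
  · omega
  · rw [Nat.even_iff] at heven; omega
  · rw [Nat.even_iff] at heven; omega

lemma carries_le_sub_two (s : ℕ) : carries s ≤ s - 2 := by
  have h := two_mul_carries_add_residue s
  unfold residue at h
  split_ifs at h <;> omega

@[simp]
lemma roundStep_zero (t : ℕ) (q : ℕ → ℕ) : roundStep t q 0 = residue (q 0) := by
  simp [roundStep]

lemma roundStep_succ_of_succ_lt {t i : ℕ} (q : ℕ → ℕ) (hi : i + 1 < t) :
    roundStep t q (i + 1) = residue (q (i + 1)) + carries (q i) := by
  simp [roundStep, hi]

lemma roundStep_succ_self (s : ℕ) (q : ℕ → ℕ) :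
    roundStep (s + 1) q (s + 1) = q (s + 1) + carries (q s) := by
  simp [roundStep]

lemma sum_range_roundStep_succ_mul (s : ℕ) (q w : ℕ → ℕ) :
    ∑ i ∈ range (s + 1 + 1), roundStep (s + 1) q i * w i =
      ∑ i ∈ range (s + 1), (residue (q i) * w i + carries (q i) * w (i + 1)) +
        q (s + 1) * w (s + 1) := by
  have hmid : ∀ i ∈ range s, roundStep (s + 1) q (i + 1) * w (i + 1) =
      residue (q (i + 1)) * w (i + 1) + carries (q i) * w (i + 1) := fun i hi => by
    rw [roundStep_succ_of_succ_lt q (by simpa using hi), add_mul]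
  rw [sum_range_succ, sum_range_succ', sum_congr rfl hmid, roundStep_succ_self, roundStep_zero,
    sum_add_distrib, sum_add_distrib, sum_range_succ (fun i => carries (q i) * w (i + 1)),
    sum_range_succ' (fun i => residue (q i) * w i)]
  ring

lemma three_mul_sum_roundStep_le (t : ℕ) (q : ℕ → ℕ) (htop : q t ≤ 2) :
    3 * ∑ i ∈ range (t + 1), roundStep t q i ≤ 2 * ∑ i ∈ range (t + 1), q i + 2 * (t + 1) := by
  rcases t with _ | s
  · simp only [zero_add, sum_range_one, roundStep_zero]
    linarith [residue_le_two (q 0), residue_le (q 0)]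
  · have hlevel : ∀ i ∈ range (s + 1), 3 * (residue (q i) + carries (q i)) ≤ 2 * q i + 2 :=
      fun i _ => by linarith [two_mul_carries_add_residue (q i), residue_le_two (q i)]
    have hsum := sum_range_roundStep_succ_mul s q fun _ => 1
    simp only [mul_one] at hsum
    rw [hsum, sum_range_succ q (s + 1), mul_add, mul_sum, mul_add, mul_sum]
    have := sum_le_sum hlevel
    rw [sum_add_distrib, sum_const, card_range, smul_eq_mul] at this
    linarith

def tokenWeight (t : ℕ) (q : ℕ → ℕ) : ℕ := ∑ i ∈ range (t + 1), q i * 2 ^ i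

lemma tokenWeight_roundStep_le (t : ℕ) (q : ℕ → ℕ) :
    tokenWeight t (roundStep t q) ≤ tokenWeight t q := by
  rcases t with _ | s
  · simpa [tokenWeight] using residue_le (q 0)
  · apply le_of_eq
    rw [tokenWeight, tokenWeight, sum_range_roundStep_succ_mul, sum_range_succ _ (s + 1)]
    congr 1
    refine sum_congr rfl fun i _ => ?_
    calc residue (q i) * 2 ^ i + carries (q i) * 2 ^ (i + 1)
        = (2 * carries (q i) + residue (q i)) * 2 ^ i := by ring
      _ = q i * 2 ^ i := by rw [two_mul_carries_add_residue]

lemma tokenWeight_iterate_roundStep_le (t : ℕ) (q : ℕ → ℕ) (r : ℕ) :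
    tokenWeight t ((roundStep t)^[r] q) ≤ tokenWeight t q := by
  simpa using pow_mul_iterate_le _ _ (c := 1) (by simpa using tokenWeight_roundStep_le t) q r

lemma le_one_of_tokenWeight_lt {t : ℕ} {q : ℕ → ℕ} (h : tokenWeight t q < 2 ^ (t + 1)) :
    q t ≤ 1 := by
  have htop : q t * 2 ^ t ≤ tokenWeight t q :=
    single_le_sum (f := fun i => q i * 2 ^ i) (fun _ _ => Nat.zero_le _) (self_mem_range_succ t)
  rw [pow_succ] at h
  by_contra! hq
  nlinarith [Nat.mul_le_mul_right (2 ^ t) hq]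

/-- Truncated subtraction is intended: only tokens beyond the two a level may keep count. -/
def excessPotential (t : ℕ) (q : ℕ → ℕ) : ℕ := ∑ i ∈ range t, (q i - 2) * 2 ^ (t - i)

lemma two_mul_excessPotential_roundStep_le (t : ℕ) (q : ℕ → ℕ) :
    2 * excessPotential t (roundStep t q) ≤ excessPotential t q := by
  rcases t with _ | s
  · simp [excessPotential]
  have hlevel : ∀ i ∈ range s, 2 * ((roundStep (s + 1) q (i + 1) - 2) * 2 ^ (s + 1 - (i + 1)))
      ≤ (q i - 2) * 2 ^ (s + 1 - i) := fun i hi => by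
    have hi : i < s := mem_range.mp hi
    rw [roundStep_succ_of_succ_lt q (by omega), show s + 1 - i = s - i + 1 by omega, pow_succ,
      Nat.add_sub_add_right]
    have : residue (q (i + 1)) + carries (q i) - 2 ≤ q i - 2 := by
      have := residue_le_two (q (i + 1)); have := carries_le_sub_two (q i); omega
    calc 2 * ((residue (q (i + 1)) + carries (q i) - 2) * 2 ^ (s - i))
        = (residue (q (i + 1)) + carries (q i) - 2) * (2 ^ (s - i) * 2) := by ring
      _ ≤ (q i - 2) * (2 ^ (s - i) * 2) := Nat.mul_le_mul_right _ this
  calc 2 * excessPotential (s + 1) (roundStep (s + 1) q)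
      = ∑ i ∈ range s, 2 * ((roundStep (s + 1) q (i + 1) - 2) * 2 ^ (s + 1 - (i + 1))) := by
        rw [excessPotential, sum_range_succ', roundStep_zero,
          Nat.sub_eq_zero_of_le (residue_le_two _), zero_mul, add_zero, mul_sum]
    _ ≤ ∑ i ∈ range s, (q i - 2) * 2 ^ (s + 1 - i) := sum_le_sum hlevel
    _ ≤ excessPotential (s + 1) q := sum_le_sum_of_subset (range_subset_range.mpr s.le_succ)

lemma excessPotential_le (t : ℕ) (q : ℕ → ℕ) :
    excessPotential t q ≤ 2 ^ t * tokenWeight t q := by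
  rw [tokenWeight, mul_sum]
  refine (sum_le_sum fun i _ => ?_).trans
    (sum_le_sum_of_subset (range_subset_range.mpr t.le_succ))
  calc (q i - 2) * 2 ^ (t - i) ≤ q i * 2 ^ t := Nat.mul_le_mul (Nat.sub_le _ _)
        (Nat.pow_le_pow_right two_pos (Nat.sub_le _ _))
    _ = 2 ^ t * (q i * 1) := by ring
    _ ≤ 2 ^ t * (q i * 2 ^ i) := Nat.mul_le_mul_left _ (Nat.mul_le_mul_left _ Nat.one_le_two_pow)

lemma le_two_of_excessPotential_eq_zero {t i : ℕ} {q : ℕ → ℕ} (h : excessPotential t q = 0)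
    (hi : i < t) : q i ≤ 2 := by
  have := (sum_eq_zero_iff.mp h) i (mem_range.mpr hi)
  simp only [mul_eq_zero, pow_eq_zero_iff', OfNat.ofNat_ne_zero, false_and, or_false] at this
  omega

lemma excessPotential_iterate_roundStep_eq_zero {t r : ℕ} {q : ℕ → ℕ}
    (h : excessPotential t q < 2 ^ r) : excessPotential t ((roundStep t)^[r] q) = 0 := by
  by_contra! hne
  have := pow_mul_iterate_le _ _ (two_mul_excessPotential_roundStep_le t) q r
  nlinarith [Nat.one_le_iff_ne_zero.mpr hne]

/-- starting from n tokens in Q₀, each round in which some level has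
≥ 3 tokens reduces the total token count by at least (total − 2(t+1))/3, and all
levels have ≤ 2 tokens after O(log n) rounds. -/
theorem almost_counting_rounds :
    ∃ C : ℕ, 0 < C ∧ ∀ n : ℕ, 1 ≤ n →
      ∀ t : ℕ, t = Nat.clog 2 (n + 1) - 1 →
        ∀ init : ℕ → ℕ, (init 0 = n ∧ ∀ i, 0 < i → init i = 0) →
          (∀ r : ℕ,
            (∃ i ≤ t, 3 ≤ (roundStep t)^[r] init i) →
              ((∑ i ∈ Finset.range (t + 1), ((roundStep t)^[r] init i : ℚ)) - 2 * (t + 1)) / 3 ≤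
                (∑ i ∈ Finset.range (t + 1), ((roundStep t)^[r] init i : ℚ)) -
                  ∑ i ∈ Finset.range (t + 1), ((roundStep t)^[r + 1] init i : ℚ)) ∧
          ∀ i ≤ t, (roundStep t)^[C * (Nat.log 2 n + 1)] init i ≤ 2 := by
  refine ⟨2, two_pos, fun n hn t ht init ⟨h0, hpos⟩ => ?_⟩
  rw [Nat.clog_succ_sub_one_eq_log one_lt_two (by omega)] at ht
  have hle : 2 ^ t ≤ n := ht ▸ Nat.pow_log_le_self 2 (by omega)
  have hlt : n < 2 ^ (t + 1) := ht ▸ Nat.lt_pow_succ_log_self one_lt_two n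
  have hweight : tokenWeight t init = n := by
    simp [tokenWeight, sum_range_succ', h0, hpos]
  have htop : ∀ r, (roundStep t)^[r] init t ≤ 1 := fun r =>
    le_one_of_tokenWeight_lt <| (tokenWeight_iterate_roundStep_le t init r).trans_lt <|
      hweight.trans_lt hlt
  refine ⟨fun r _ => ?_, fun i hi => ?_⟩
  · have key := (Nat.cast_le (α := ℚ)).mpr <|
      three_mul_sum_roundStep_le t _ ((htop r).trans one_le_two)
    push_cast at key
    rw [Function.iterate_succ_apply', div_le_iff₀ three_pos]
    linarith
  · rw [← ht]
    have hstart : excessPotential t init < 2 ^ (2 * (t + 1)) := calc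
      _ ≤ 2 ^ t * n := (excessPotential_le t init).trans_eq (by rw [hweight])
      _ ≤ n * n := Nat.mul_le_mul_right n hle
      _ < 2 ^ (t + 1) * 2 ^ (t + 1) := Nat.mul_self_lt_mul_self hlt
      _ = 2 ^ (2 * (t + 1)) := by rw [← pow_add, ← two_mul]
    rcases hi.lt_or_eq with hi | rfl
    · exact le_two_of_excessPotential_eq_zero (excessPotential_iterate_roundStep_eq_zero hstart) hi
    · exact (htop _).trans one_le_two
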